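/- arXiv:2108.13965 — 4 statements merged into one kernel-verified Lean document; each statement's English description precedes it below -/
import Mathlib

section
/- Denardo's Theorem 2 (supremum of contractions is a contraction): let {B_α : α ∈ I} be a nonempty family of operators on the space V of bounded functions on Ω, each with modulus at most c ∈ [0,1) under the sup metric ρ. If the operator E defined by (EJ)(x) = sup_{α ∈ I} (B_α J)(x) maps V into V, then E also has modulus at most c, i.e., ρ(EJ, EJ') ≤ c ρ(J, J') for all J, J' ∈ V. -/
/-- A function `Ω → ℝ` is bounded. -/
def IsBddFun {Ω : Type} (J : Ω → ℝ) : Prop := ∃ M, ∀ x, |J x| ≤ M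

/-- The sup metric on bounded functions. -/
noncomputable def supDist {Ω : Type} (J J' : Ω → ℝ) : ℝ := ⨆ x, |J x - J' x|

lemma supDist_pt_le {Ω : Type} (J J' : Ω → ℝ) (hJ : IsBddFun J) (hJ' : IsBddFun J')
    (x : Ω) : |J x - J' x| ≤ supDist J J' := by
  obtain ⟨M, hM⟩ := hJ
  obtain ⟨M', hM'⟩ := hJ'
  apply le_ciSup (f := fun x => |J x - J' x|)
  refine ⟨M + M', ?_⟩
  rintro _ ⟨y, rfl⟩
  calc |J y - J' y| ≤ |J y| + |J' y| := abs_sub _ _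
  _ ≤ M + M' := add_le_add (hM y) (hM' y)

/-- Denardo's Theorem 2: a pointwise supremum of a nonempty family of operators,
each of modulus at most `c`, again has modulus at most `c`. -/
theorem denardo_sup_of_contractions
    (Ω I : Type) [Nonempty Ω] [Nonempty I] (c : ℝ) (hc0 : 0 ≤ c) (hc1 : c < 1)
    (B : I → (Ω → ℝ) → (Ω → ℝ))
    (hBbdd : ∀ α J, IsBddFun J → IsBddFun (B α J))
    (hBcontr : ∀ α J J', IsBddFun J → IsBddFun J' →
      supDist (B α J) (B α J') ≤ c * supDist J J')
    (hEbdd : ∀ J, IsBddFun J → IsBddFun (fun x => ⨆ α, B α J x))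
    (hEwell : ∀ J, IsBddFun J → ∀ x, BddAbove (Set.range fun α => B α J x))
    (J J' : Ω → ℝ) (hJ : IsBddFun J) (hJ' : IsBddFun J') :
    supDist (fun x => ⨆ α, B α J x) (fun x => ⨆ α, B α J' x) ≤ c * supDist J J' := by
  have key : ∀ α x, |B α J x - B α J' x| ≤ c * supDist J J' := fun α x =>
    (supDist_pt_le _ _ (hBbdd α J hJ) (hBbdd α J' hJ') x).trans (hBcontr α J J' hJ hJ')
  apply ciSup_le
  intro x
  rw [abs_sub_le_iff]
  constructor
  · rw [sub_le_iff_le_add]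
    apply ciSup_le
    intro α
    have : B α J x ≤ B α J' x + c * supDist J J' := by
      have := (abs_le.mp (key α x)).2; linarith
    exact this.trans (by
      have := le_ciSup (hEwell J' hJ' x) α
      linarith)
  · rw [sub_le_iff_le_add]
    apply ciSup_le
    intro α
    have : B α J' x ≤ B α J x + c * supDist J J' := by
      have := (abs_le.mp (key α x)).1; linarith
    exact this.trans (by
      have := le_ciSup (hEwell J hJ x) α
      linarith)
end

section
/- Astrom's complete-information lower bound (Theorem 4): let J̲_k : X → R solve the perfect-information dynamic programming recursion J̲_k(i) = min_u [g(i,u,k) + ∑_j p_{ij}(u) J̲_{k+1}(j)] with J̲_{N+1} ≡ 0, and let J_k(π) solve the partially-observed recursion J_k(π) = min_u [∑_i g(i,u,k) π(i) + ∑_{y} σ(π,u,y) J_{k+1}(T(π,u,y))] with J_{N+1} ≡ 0. Then for every belief π in the simplex and every k, ⟨π, J̲_k⟩ ≤ J_k(π), i.e., the expected complete-information cost-to-go is a lower bound on the partially-observed optimal cost-to-go. -/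
/-- Astrom's Theorem 4: the expected complete-information optimal cost-to-go is a
lower bound on the partially-observed optimal cost-to-go. -/
theorem astrom_complete_information_lower_bound
    (n : ℕ) (U Y : Type) [Fintype U] [Nonempty U] [Fintype Y] [Nonempty Y]
    (N : ℕ) (g : Fin n → U → ℕ → ℝ)
    (p : U → Fin n → Fin n → ℝ) (q : Fin n → Y → ℝ)
    (hpnn : ∀ u i j, 0 ≤ p u i j) (hpsum : ∀ u i, ∑ j, p u i j = 1)
    (hqnn : ∀ j y, 0 ≤ q j y) (hqsum : ∀ j, ∑ y, q j y = 1)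
    (σ : (Fin n → ℝ) → U → Y → ℝ) (T : (Fin n → ℝ) → U → Y → (Fin n → ℝ))
    (hσ : ∀ π u y, σ π u y = ∑ j, (∑ i, π i * p u i j) * q j y)
    (hT : ∀ π u y j, σ π u y * T π u y j = (∑ i, π i * p u i j) * q j y)
    (Jlow : ℕ → Fin n → ℝ)
    (hJlowN : ∀ i, Jlow (N + 1) i = 0)
    (hJlowrec : ∀ k ≤ N, ∀ i, Jlow k i =
      Finset.univ.inf' Finset.univ_nonempty
        (fun u : U => g i u k + ∑ j, p u i j * Jlow (k + 1) j))
    (J : ℕ → (Fin n → ℝ) → ℝ)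
    (hJN : ∀ π, J (N + 1) π = 0)
    (hJrec : ∀ k ≤ N, ∀ π, J k π =
      Finset.univ.inf' Finset.univ_nonempty
        (fun u : U => (∑ i, g i u k * π i) + ∑ y, σ π u y * J (k + 1) (T π u y))) :
    ∀ k ≤ N + 1, ∀ π : Fin n → ℝ, (∀ i, 0 ≤ π i) → (∑ i, π i = 1) →
      ∑ i, π i * Jlow k i ≤ J k π := by
  have main : ∀ d k, k + d = N + 1 → ∀ π : Fin n → ℝ, (∀ i, 0 ≤ π i) → (∑ i, π i = 1) →
      ∑ i, π i * Jlow k i ≤ J k π := by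
    intro d
    induction d with
    | zero =>
      intro k hk π hπ hπs
      have : k = N + 1 := by omega
      subst this
      simp [hJlowN, hJN]
    | succ d ih =>
      intro k hk π hπ hπs
      have hkN : k ≤ N := by omega
      rw [hJrec k hkN]
      apply Finset.le_inf'
      intro u _
      have step1 : ∑ i, π i * Jlow k i
          ≤ ∑ i, π i * (g i u k + ∑ j, p u i j * Jlow (k+1) j) := by
        apply Finset.sum_le_sum
        intro i _
        apply mul_le_mul_of_nonneg_left _ (hπ i)
        rw [hJlowrec k hkN i]
        exact Finset.inf'_le _ (Finset.mem_univ u)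
      have step2 : ∑ i, π i * (g i u k + ∑ j, p u i j * Jlow (k+1) j)
          = (∑ i, g i u k * π i) + ∑ j, (∑ i, π i * p u i j) * Jlow (k+1) j := by
        simp only [mul_add, Finset.mul_sum, Finset.sum_add_distrib]
        congr 1
        · exact Finset.sum_congr rfl (fun i _ => mul_comm _ _)
        · rw [Finset.sum_comm]
          refine Finset.sum_congr rfl (fun j _ => ?_)
          rw [Finset.sum_mul]
          exact Finset.sum_congr rfl (fun i _ => by ring)
      have step3 : ∑ j, (∑ i, π i * p u i j) * Jlow (k+1) j
          = ∑ y, ∑ j, (σ π u y * T π u y j) * Jlow (k+1) j := by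
        rw [Finset.sum_comm]
        refine Finset.sum_congr rfl (fun j _ => ?_)
        rw [← Finset.sum_mul]
        congr 1
        symm
        calc ∑ y, σ π u y * T π u y j = ∑ y, (∑ i, π i * p u i j) * q j y := by
              exact Finset.sum_congr rfl (fun y _ => hT π u y j)
          _ = (∑ i, π i * p u i j) * ∑ y, q j y := by rw [Finset.mul_sum]
          _ = ∑ i, π i * p u i j := by rw [hqsum j, mul_one]
      have step4 : ∀ y, ∑ j, (σ π u y * T π u y j) * Jlow (k+1) j
          ≤ σ π u y * J (k+1) (T π u y) := by
        intro y
        have hσnn : 0 ≤ σ π u y := by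
          rw [hσ]
          apply Finset.sum_nonneg
          intro j _
          exact mul_nonneg (Finset.sum_nonneg fun i _ => mul_nonneg (hπ i) (hpnn u i j))
            (hqnn j y)
        rcases eq_or_lt_of_le hσnn with h0 | hpos
        · simp [← h0]
        · -- T π u y is a probability vector
          have hTnn : ∀ j, 0 ≤ T π u y j := by
            intro j
            have := hT π u y j
            have hnn : 0 ≤ σ π u y * T π u y j := by
              rw [this]
              exact mul_nonneg (Finset.sum_nonneg fun i _ =>
                mul_nonneg (hπ i) (hpnn u i j)) (hqnn j y)
            exact nonneg_of_mul_nonneg_right hnn hpos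
          have hTsum : ∑ j, T π u y j = 1 := by
            have h1 : σ π u y * ∑ j, T π u y j = σ π u y * 1 := by
              rw [Finset.mul_sum, mul_one]
              calc ∑ j, σ π u y * T π u y j
                  = ∑ j, (∑ i, π i * p u i j) * q j y :=
                    Finset.sum_congr rfl (fun j _ => hT π u y j)
                _ = σ π u y := (hσ π u y).symm
            exact mul_left_cancel₀ (ne_of_gt hpos) h1
          have hih := ih (k+1) (by omega) (T π u y) hTnn hTsum
          calc ∑ j, (σ π u y * T π u y j) * Jlow (k+1) j
              = σ π u y * ∑ j, T π u y j * Jlow (k+1) j := by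
                rw [Finset.mul_sum]
                exact Finset.sum_congr rfl (fun j _ => by ring)
            _ ≤ σ π u y * J (k+1) (T π u y) :=
                mul_le_mul_of_nonneg_left hih (le_of_lt hpos)
      calc ∑ i, π i * Jlow k i
          ≤ (∑ i, g i u k * π i) + ∑ y, ∑ j, (σ π u y * T π u y j) * Jlow (k+1) j := by
            rw [← step3, ← step2]; exact step1
        _ ≤ (∑ i, g i u k * π i) + ∑ y, σ π u y * J (k+1) (T π u y) := by
            exact add_le_add_right (Finset.sum_le_sum fun y _ => step4 y) _
  intro k hk π hπ hπs
  exact main (N + 1 - k) k (by omega) π hπ hπs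
end

section
/- Astrom's open-loop upper bound (Theorem 5): let V_k solve the open-loop recursion V_k(π) = min_u [⟨π, g(·,u,k)⟩ + V_{k+1}(P(u)^T π)] with V_{N+1} ≡ 0, and let J_k solve the partially-observed DP recursion J_k(π) = min_u [⟨π, g(·,u,k)⟩ + ∑_y σ(π,u,y) J_{k+1}(T(π,u,y))] with J_{N+1} ≡ 0. Assume each J_{k+1} is concave on the simplex. Then J_k(π) ≤ V_k(π) for every belief π and every k. -/
/-- Astrom's Theorem 5: the open-loop cost-to-go is an upper bound on the
partially-observed optimal cost-to-go (given concavity of the `J_{k+1}`). -/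
theorem astrom_open_loop_upper_bound
    (n : ℕ) (U Y : Type) [Fintype U] [Nonempty U] [Fintype Y] [Nonempty Y]
    (N : ℕ) (g : Fin n → U → ℕ → ℝ)
    (p : U → Fin n → Fin n → ℝ)
    (hpnn : ∀ u i j, 0 ≤ p u i j) (hpsum : ∀ u i, ∑ j, p u i j = 1)
    (σ : (Fin n → ℝ) → U → Y → ℝ) (T : (Fin n → ℝ) → U → Y → (Fin n → ℝ))
    (hσnn : ∀ π u y, 0 ≤ σ π u y)
    (hσsum : ∀ π : Fin n → ℝ, (∀ i, 0 ≤ π i) → (∑ i, π i = 1) →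
      ∀ u : U, ∑ y, σ π u y = 1)
    (hmix : ∀ π : Fin n → ℝ, (∀ i, 0 ≤ π i) → (∑ i, π i = 1) → ∀ (u : U) (j : Fin n),
      ∑ y, σ π u y * T π u y j = ∑ i, π i * p u i j)
    (hTsimplex : ∀ π : Fin n → ℝ, (∀ i, 0 ≤ π i) → (∑ i, π i = 1) → ∀ (u : U) (y : Y),
      0 < σ π u y → (∀ j, 0 ≤ T π u y j) ∧ ∑ j, T π u y j = 1)
    (J V : ℕ → (Fin n → ℝ) → ℝ)
    (hJN : ∀ π, J (N + 1) π = 0)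
    (hJrec : ∀ k ≤ N, ∀ π, J k π =
      Finset.univ.inf' Finset.univ_nonempty
        (fun u : U => (∑ i, g i u k * π i) + ∑ y, σ π u y * J (k + 1) (T π u y)))
    (hVN : ∀ π, V (N + 1) π = 0)
    (hVrec : ∀ k ≤ N, ∀ π, V k π =
      Finset.univ.inf' Finset.univ_nonempty
        (fun u : U => (∑ i, g i u k * π i) + V (k + 1) (fun j => ∑ i, π i * p u i j)))
    (hconc : ∀ k, ConcaveOn ℝ {π : Fin n → ℝ | (∀ i, 0 ≤ π i) ∧ ∑ i, π i = 1} (J k)) :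
    ∀ k ≤ N + 1, ∀ π : Fin n → ℝ, (∀ i, 0 ≤ π i) → (∑ i, π i = 1) →
      J k π ≤ V k π := by
  classical
  have main : ∀ d k, k + d = N + 1 → ∀ π : Fin n → ℝ, (∀ i, 0 ≤ π i) → (∑ i, π i = 1) →
      J k π ≤ V k π := by
    intro d
    induction d with
    | zero =>
      intro k hk π _ _
      have : k = N + 1 := by omega
      simp [this, hJN, hVN]
    | succ d ih =>
      intro k hk π hπnn hπsum
      have hkN : k ≤ N := by omega
      rw [hJrec k hkN π, hVrec k hkN π]
      apply Finset.le_inf'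
      intro u _
      refine le_trans (Finset.inf'_le _ (Finset.mem_univ u)) ?_
      have hmem : (fun j => ∑ i, π i * p u i j) ∈
          {π : Fin n → ℝ | (∀ i, 0 ≤ π i) ∧ ∑ i, π i = 1} := by
        constructor
        · intro j
          exact Finset.sum_nonneg fun i _ => mul_nonneg (hπnn i) (hpnn u i j)
        · rw [Finset.sum_comm]
          simp only [← Finset.mul_sum, hpsum, mul_one, hπsum]
      have hIH : J (k + 1) (fun j => ∑ i, π i * p u i j) ≤
          V (k + 1) (fun j => ∑ i, π i * p u i j) :=
        ih (k + 1) (by omega) _ hmem.1 hmem.2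
      -- Jensen step on the positive-weight observations
      set t : Finset Y := Finset.univ.filter (fun y => 0 < σ π u y) with ht
      have hzero : ∀ y ∈ Finset.univ \ t, σ π u y = 0 := by
        intro y hy
        simp only [ht, Finset.mem_sdiff, Finset.mem_filter, Finset.mem_univ, true_and,
          not_lt] at hy
        exact le_antisymm hy (hσnn π u y)
      have hsum_t : ∑ y ∈ t, σ π u y = 1 := by
        rw [← hσsum π hπnn hπsum u]
        refine Finset.sum_subset (Finset.subset_univ t) ?_
        intro y _ hy
        exact hzero y (Finset.mem_sdiff.mpr ⟨Finset.mem_univ y, hy⟩)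
      have hJsum : ∑ y, σ π u y * J (k + 1) (T π u y)
          = ∑ y ∈ t, σ π u y • J (k + 1) (T π u y) := by
        refine (Finset.sum_subset (Finset.subset_univ t) ?_).symm
        intro y _ hy
        rw [hzero y (Finset.mem_sdiff.mpr ⟨Finset.mem_univ y, hy⟩), zero_mul]
      have hmixeq : (∑ y ∈ t, σ π u y • T π u y) = fun j => ∑ i, π i * p u i j := by
        funext j
        have : (∑ y ∈ t, σ π u y • T π u y) j = ∑ y ∈ t, σ π u y * T π u y j := by
          simp [Finset.sum_apply]
        rw [this, ← hmix π hπnn hπsum u j]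
        refine Finset.sum_subset (Finset.subset_univ t) ?_
        intro y _ hy
        rw [hzero y (Finset.mem_sdiff.mpr ⟨Finset.mem_univ y, hy⟩), zero_mul]
      have hjensen : ∑ y ∈ t, σ π u y • J (k + 1) (T π u y)
          ≤ J (k + 1) (∑ y ∈ t, σ π u y • T π u y) := by
        refine (hconc (k + 1)).le_map_sum (fun y _ => hσnn π u y) hsum_t ?_
        intro y hy
        have hpos : 0 < σ π u y := (Finset.mem_filter.mp hy).2
        exact hTsimplex π hπnn hπsum u y hpos
      rw [hmixeq] at hjensen
      rw [hJsum]
      exact add_le_add_right (le_trans hjensen hIH) _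
  intro k hk π hπnn hπsum
  exact main (N + 1 - k) k (by omega) π hπnn hπsum
end

section
/- Concavity of the optimal partially-observed cost-to-go: in the finite-horizon POMDP cost-minimization recursion J_N(π) = min_u ⟨π, g(·,u,N)⟩ and J_k(π) = min_u [⟨π, g(·,u,k)⟩ + ∑_y σ(π,u,y) J_{k+1}(T(π,u,y))], each J_k is concave on the probability simplex; indeed J_k is the minimum of finitely many linear functions of π. -/
lemma mono_map_inf' {α : Type*} (s : Finset α) (hs : s.Nonempty) (f : α → ℝ)
    (m : ℝ → ℝ) (hm : Monotone m) : m (s.inf' hs f) = s.inf' hs (fun a => m (f a)) := by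
  obtain ⟨b, hb, hbe⟩ := s.exists_mem_eq_inf' hs f
  refine le_antisymm (Finset.le_inf' _ _ fun a ha => hm (Finset.inf'_le f ha)) ?_
  rw [hbe]
  exact Finset.inf'_le _ hb

lemma inf'_equiv {A B : Type*} [Fintype A] [Fintype B] [Nonempty A] [Nonempty B]
    (e : A ≃ B) (f : B → ℝ) :
    Finset.univ.inf' Finset.univ_nonempty (fun a => f (e a)) =
      Finset.univ.inf' Finset.univ_nonempty f := by
  refine le_antisymm (Finset.le_inf' _ _ fun b _ => ?_) (Finset.le_inf' _ _ fun a _ => ?_)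
  · have := Finset.inf'_le (fun a => f (e a)) (Finset.mem_univ (e.symm b))
    simpa only [Equiv.apply_symm_apply] using this
  · exact Finset.inf'_le f (Finset.mem_univ (e a))

lemma sum_inf' {Y L : Type*} [DecidableEq Y] [Fintype Y] [Fintype L] [Nonempty Y] [Nonempty L]
    (φ : Y → L → ℝ) :
    ∑ y, Finset.univ.inf' Finset.univ_nonempty (φ y) =
      Finset.univ.inf' Finset.univ_nonempty (fun f : Y → L => ∑ y, φ y (f y)) := by
  refine le_antisymm (Finset.le_inf' _ _ fun f _ => Finset.sum_le_sum fun y _ =>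
    Finset.inf'_le _ (Finset.mem_univ (f y))) ?_
  have hch : ∀ y : Y, ∃ l : L, Finset.univ.inf' Finset.univ_nonempty (φ y) = φ y l := by
    intro y
    obtain ⟨l, _, hl⟩ := Finset.exists_mem_eq_inf' (Finset.univ_nonempty) (φ y)
    exact ⟨l, hl⟩
  choose f hf using hch
  calc Finset.univ.inf' Finset.univ_nonempty (fun f : Y → L => ∑ y, φ y (f y))
      ≤ ∑ y, φ y (f y) := Finset.inf'_le _ (Finset.mem_univ f)
    _ = ∑ y, Finset.univ.inf' Finset.univ_nonempty (φ y) :=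
        Finset.sum_congr rfl fun y _ => (hf y).symm

lemma inf'_inf' {A B : Type*} [Fintype A] [Fintype B] [Nonempty A] [Nonempty B]
    (G : A → B → ℝ) :
    Finset.univ.inf' Finset.univ_nonempty
        (fun a => Finset.univ.inf' Finset.univ_nonempty (G a)) =
      Finset.univ.inf' Finset.univ_nonempty (fun ab : A × B => G ab.1 ab.2) := by
  refine le_antisymm (Finset.le_inf' _ _ fun ab _ => ?_) (Finset.le_inf' _ _ fun a _ => ?_)
  · calc Finset.univ.inf' Finset.univ_nonempty
          (fun a => Finset.univ.inf' Finset.univ_nonempty (G a))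
        ≤ Finset.univ.inf' Finset.univ_nonempty (G ab.1) :=
          Finset.inf'_le _ (Finset.mem_univ ab.1)
      _ ≤ G ab.1 ab.2 := Finset.inf'_le _ (Finset.mem_univ ab.2)
  · exact Finset.le_inf' _ _ fun b _ =>
      Finset.inf'_le (fun ab : A × B => G ab.1 ab.2) (Finset.mem_univ (a, b))

/-- Concavity of the optimal partially-observed cost-to-go: each `J_k` in the
finite-horizon POMDP cost-minimization recursion is a minimum of finitely many
linear functions of the belief, hence concave on the probability simplex. -/
theorem pomdp_value_concave_min_of_linear
    (n : ℕ) (U Y : Type) [Fintype U] [Nonempty U] [Fintype Y] [Nonempty Y]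
    (N : ℕ) (g : Fin n → U → ℕ → ℝ)
    (p : U → Fin n → Fin n → ℝ) (q : U → Fin n → Y → ℝ)
    (hpnn : ∀ u i j, 0 ≤ p u i j) (hpsum : ∀ u i, ∑ j, p u i j = 1)
    (hqnn : ∀ u j y, 0 ≤ q u j y) (hqsum : ∀ u j, ∑ y, q u j y = 1)
    (σ : (Fin n → ℝ) → U → Y → ℝ) (T : (Fin n → ℝ) → U → Y → (Fin n → ℝ))
    (hσ : ∀ π u y, σ π u y = ∑ j, (∑ i, π i * p u i j) * q u j y)
    (hT : ∀ π u y j, T π u y j = (∑ i, π i * p u i j) * q u j y / σ π u y)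
    (J : ℕ → (Fin n → ℝ) → ℝ)
    (hJN : ∀ π, J N π =
      Finset.univ.inf' Finset.univ_nonempty (fun u : U => ∑ i, g i u N * π i))
    (hJrec : ∀ k < N, ∀ π, J k π =
      Finset.univ.inf' Finset.univ_nonempty
        (fun u : U => (∑ i, g i u k * π i) + ∑ y, σ π u y * J (k + 1) (T π u y))) :
    ∀ k ≤ N,
      (∃ (L : ℕ) (hL : 0 < L) (β : Fin L → Fin n → ℝ),
        ∀ π : Fin n → ℝ, (∀ i, 0 ≤ π i) → (∑ i, π i = 1) →
          J k π = Finset.univ.inf' ⟨⟨0, hL⟩, Finset.mem_univ _⟩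
            (fun l => ∑ i, β l i * π i)) ∧
      ConcaveOn ℝ {π : Fin n → ℝ | (∀ i, 0 ≤ π i) ∧ ∑ i, π i = 1} (J k) := by
  classical
  -- Step 1: the representation, by downward induction.
  have key : ∀ m : ℕ, ∀ k, k + m = N →
      ∃ (L : ℕ) (hL : 0 < L) (β : Fin L → Fin n → ℝ),
        ∀ π : Fin n → ℝ, (∀ i, 0 ≤ π i) → (∑ i, π i = 1) →
          J k π = Finset.univ.inf' ⟨⟨0, hL⟩, Finset.mem_univ _⟩
            (fun l => ∑ i, β l i * π i) := by
    intro m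
    induction m with
    | zero =>
      intro k hk
      rw [Nat.add_zero] at hk; subst hk
      set e : Fin (Fintype.card U) ≃ U := (Fintype.equivFin U).symm with he
      refine ⟨Fintype.card U, Fintype.card_pos, fun l i => g i (e l) k, fun π _ _ => ?_⟩
      rw [hJN π]
      exact (inf'_equiv e (fun u => ∑ i, g i u k * π i)).symm
    | succ m ih =>
      intro k hk
      have hkN : k < N := by omega
      obtain ⟨L, hL, β, hβ⟩ := ih (k + 1) (by omega)
      haveI : Nonempty (Fin L) := ⟨⟨0, hL⟩⟩
      set Λ := U × (Y → Fin L)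
      set β' : Λ → Fin n → ℝ := fun uf i =>
        g i uf.1 k + ∑ y, ∑ j, p uf.1 i j * q uf.1 j y * β (uf.2 y) j with hβ'
      have main : ∀ π : Fin n → ℝ, (∀ i, 0 ≤ π i) → (∑ i, π i = 1) →
          J k π = Finset.univ.inf' Finset.univ_nonempty
            (fun uf : Λ => ∑ i, β' uf i * π i) := by
        intro π hπnn hπs
        -- per-(u,y) identity
        have step1 : ∀ u y, σ π u y * J (k + 1) (T π u y) =
            Finset.univ.inf' Finset.univ_nonempty
              (fun l : Fin L => ∑ j, ((∑ i, π i * p u i j) * q u j y) * β l j) := by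
          intro u y
          set c : Fin n → ℝ := fun j => (∑ i, π i * p u i j) * q u j y with hc
          have hcnn : ∀ j, 0 ≤ c j := fun j =>
            mul_nonneg (Finset.sum_nonneg fun i _ => mul_nonneg (hπnn i) (hpnn u i j))
              (hqnn u j y)
          have hcsum : ∑ j, c j = σ π u y := (hσ π u y).symm
          by_cases hσ0 : σ π u y = 0
          · have hcz : ∀ j ∈ Finset.univ, c j = 0 := by
              rw [← Finset.sum_eq_zero_iff_of_nonneg (fun j _ => hcnn j)]
              rw [hcsum]; exact hσ0
            have : (fun l : Fin L => ∑ j, c j * β l j) = fun _ => (0 : ℝ) := by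
              funext l
              exact Finset.sum_eq_zero fun j hj => by rw [hcz j hj, zero_mul]
            rw [hσ0, zero_mul, this, Finset.inf'_const]
          · have hσpos : 0 < σ π u y := by
              rcases lt_or_eq_of_le (hcsum ▸ Finset.sum_nonneg fun j _ => hcnn j) with h | h
              · exact h
              · exact absurd h.symm hσ0
            have hTnn : ∀ j, 0 ≤ T π u y j := fun j => by
              rw [hT]; exact div_nonneg (hcnn j) hσpos.le
            have hTs : ∑ j, T π u y j = 1 := by
              have : ∑ j, T π u y j = (∑ j, c j) / σ π u y := by
                rw [Finset.sum_div]
                exact Finset.sum_congr rfl fun j _ => hT π u y j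
              rw [this, hcsum, div_self hσ0]
            rw [hβ (T π u y) hTnn hTs]
            refine Eq.trans (mono_map_inf' (Finset.univ) (⟨⟨0, hL⟩, Finset.mem_univ _⟩)
              (fun l : Fin L => ∑ i, β l i * T π u y i)
              (fun x => σ π u y * x)
              (fun a b hab => mul_le_mul_of_nonneg_left hab hσpos.le)) ?_
            refine Finset.inf'_congr _ rfl fun l _ => ?_
            show σ π u y * (∑ i, β l i * T π u y i) =
              ∑ j, ((∑ i, π i * p u i j) * q u j y) * β l j
            rw [Finset.mul_sum]
            refine Finset.sum_congr rfl fun j _ => ?_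
            rw [hT π u y j]
            field_simp
        -- sum over observations
        have step2 : ∀ u, ∑ y, σ π u y * J (k + 1) (T π u y) =
            Finset.univ.inf' Finset.univ_nonempty
              (fun f : Y → Fin L => ∑ y, ∑ j,
                ((∑ i, π i * p u i j) * q u j y) * β (f y) j) := by
          intro u
          calc ∑ y, σ π u y * J (k + 1) (T π u y)
              = ∑ y, Finset.univ.inf' Finset.univ_nonempty
                  (fun l : Fin L => ∑ j, ((∑ i, π i * p u i j) * q u j y) * β l j) :=
                Finset.sum_congr rfl fun y _ => step1 u y
            _ = _ := sum_inf' _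
        rw [hJrec k hkN π]
        have step3 : (fun u : U => (∑ i, g i u k * π i) +
              ∑ y, σ π u y * J (k + 1) (T π u y)) =
            fun u : U => Finset.univ.inf' Finset.univ_nonempty
              (fun f : Y → Fin L => (∑ i, g i u k * π i) + ∑ y, ∑ j,
                ((∑ i, π i * p u i j) * q u j y) * β (f y) j) := by
          funext u
          rw [step2 u]
          exact mono_map_inf' _ _ _ (fun x => (∑ i, g i u k * π i) + x)
            (fun a b hab => add_le_add_right hab _)
        rw [step3, inf'_inf']
        refine Finset.inf'_congr _ rfl fun uf _ => ?_
        obtain ⟨u, f⟩ := uf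
        have rhs : ∑ i, β' (u, f) i * π i =
            ∑ i, g i u k * π i +
              ∑ i, (∑ y, ∑ j, p u i j * q u j y * β (f y) j) * π i := by
          simp only [hβ', add_mul]
          rw [Finset.sum_add_distrib]
        show (∑ i, g i u k * π i) +
            ∑ y, ∑ j, ((∑ i, π i * p u i j) * q u j y) * β (f y) j =
          ∑ i, β' (u, f) i * π i
        rw [rhs]
        congr 1
        calc ∑ y, ∑ j, ((∑ i, π i * p u i j) * q u j y) * β (f y) j
            = ∑ y, ∑ j, ∑ i, π i * p u i j * q u j y * β (f y) j := by
              refine Finset.sum_congr rfl fun y _ => Finset.sum_congr rfl fun j _ => ?_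
              rw [Finset.sum_mul, Finset.sum_mul]
          _ = ∑ y, ∑ i, ∑ j, π i * p u i j * q u j y * β (f y) j :=
              Finset.sum_congr rfl fun y _ => Finset.sum_comm ..
          _ = ∑ i, ∑ y, ∑ j, π i * p u i j * q u j y * β (f y) j :=
              Finset.sum_comm ..
          _ = ∑ i, (∑ y, ∑ j, p u i j * q u j y * β (f y) j) * π i := by
              refine Finset.sum_congr rfl fun i _ => ?_
              rw [Finset.sum_mul]
              refine Finset.sum_congr rfl fun y _ => ?_
              rw [Finset.sum_mul]
              exact Finset.sum_congr rfl fun j _ => by ring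
      -- transfer index to Fin
      haveI : Nonempty Λ := instNonemptyProd
      set e : Fin (Fintype.card Λ) ≃ Λ := (Fintype.equivFin Λ).symm
      refine ⟨Fintype.card Λ, Fintype.card_pos, fun l => β' (e l), fun π h1 h2 => ?_⟩
      rw [main π h1 h2]
      exact (inf'_equiv e (fun uf : Λ => ∑ i, β' uf i * π i)).symm
  intro k hkN
  obtain ⟨L, hL, β, hβ⟩ := key (N - k) k (by omega)
  refine ⟨⟨L, hL, β, hβ⟩, ?_⟩
  have hconv : Convex ℝ {π : Fin n → ℝ | (∀ i, 0 ≤ π i) ∧ ∑ i, π i = 1} :=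
    convex_stdSimplex ℝ (Fin n)
  refine ⟨hconv, ?_⟩
  intro x hx y hy a b ha hb hab
  have hxy : (∀ i, 0 ≤ (a • x + b • y) i) ∧ ∑ i, (a • x + b • y) i = 1 :=
    hconv hx hy ha hb hab
  obtain ⟨hx1, hx2⟩ := hx
  obtain ⟨hy1, hy2⟩ := hy
  rw [hβ x hx1 hx2, hβ y hy1 hy2, hβ _ hxy.1 hxy.2]
  simp only [smul_eq_mul]
  refine Finset.le_inf' _ _ fun l _ => ?_
  have hl1 : Finset.univ.inf' ⟨⟨0, hL⟩, Finset.mem_univ _⟩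
      (fun l => ∑ i, β l i * x i) ≤ ∑ i, β l i * x i :=
    Finset.inf'_le _ (Finset.mem_univ l)
  have hl2 : Finset.univ.inf' ⟨⟨0, hL⟩, Finset.mem_univ _⟩
      (fun l => ∑ i, β l i * y i) ≤ ∑ i, β l i * y i :=
    Finset.inf'_le _ (Finset.mem_univ l)
  have expand : ∑ i, β l i * (a • x + b • y) i =
      a * ∑ i, β l i * x i + b * ∑ i, β l i * y i := by
    simp only [Pi.add_apply, Pi.smul_apply, smul_eq_mul, Finset.mul_sum]
    rw [← Finset.sum_add_distrib]
    exact Finset.sum_congr rfl fun i _ => by ring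
  rw [expand]
  exact add_le_add (mul_le_mul_of_nonneg_left hl1 ha) (mul_le_mul_of_nonneg_left hl2 hb)
end
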